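/- arXiv:1405.4231 — 2 statements merged into one kernel-verified Lean document; each statement's English description precedes it below -/
import Mathlib

section
/- For a positive integer s, [D_X, (1+Δ)^s]Y = Σ_{k=1}^{s} (−1)^k C(s,k) Σ_{j=0}^{2k−1} ∇_{γ̇}^j ( R(X,γ̇) ∇_{γ̇}^{2k−1−j} Y ), where C(s,k) is the binomial coefficient. -/
/-! Commutation with `D` is a derivation of the ring of operators, so `[D, g ^ n]` is the sum of
`g ^ j [D, g] g ^ (n - 1 - j)`. Expanding `(1 - g²) ^ s` binomially and applying this with
`n = 2k` to each term gives the formula; the `k = 0` term vanishes. -/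

open Finset

theorem mul_pow_sub_pow_mul_eq_sum {A : Type*} [Ring A] (D g : A) (n : ℕ) :
    D * g ^ n - g ^ n * D = ∑ j ∈ range n, g ^ j * (D * g - g * D) * g ^ (n - 1 - j) := by
  induction n with
  | zero => simp
  | succ n ih =>
    have leibniz : D * g ^ (n + 1) - g ^ (n + 1) * D
        = (D * g - g * D) * g ^ n + g * (D * g ^ n - g ^ n * D) := by
      rw [pow_succ']; noncomm_ring
    rw [leibniz, ih, sum_range_succ', mul_sum, add_comm]
    congr 1
    · refine sum_congr rfl fun j _ => ?_
      rw [← mul_assoc, ← mul_assoc, ← pow_succ', Nat.add_sub_cancel, Nat.sub_sub,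
        add_comm 1 j]
    · simp

theorem one_add_neg_sq_pow_eq_sum {R A : Type*} [CommRing R] [Ring A] [Algebra R A]
    (g : A) (s : ℕ) :
    (1 + -(g * g)) ^ s = ∑ k ∈ range (s + 1), ((-1 : R) ^ k * s.choose k) • g ^ (2 * k) := by
  rw [add_comm, (Commute.one_right _).add_pow]
  refine sum_congr rfl fun k _ => ?_
  rw [one_pow, mul_one, neg_pow, ← sq, ← pow_mul, mul_assoc, ← Nat.cast_comm, mul_smul,
    Algebra.smul_def, Nat.cast_smul_eq_nsmul, nsmul_eq_mul, map_pow, map_neg, map_one]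

theorem mul_one_add_neg_sq_pow_sub_eq_sum {R A : Type*} [CommRing R] [Ring A] [Algebra R A]
    (D g : A) (s : ℕ) :
    D * (1 + -(g * g)) ^ s - (1 + -(g * g)) ^ s * D
      = ∑ k ∈ Icc 1 s, ((-1 : R) ^ k * s.choose k) •
          ∑ j ∈ range (2 * k), g ^ j * (D * g - g * D) * g ^ (2 * k - 1 - j) := by
  have commutator_smul (c : R) (x : A) : D * (c • x) - (c • x) * D = c • (D * x - x * D) := by
    rw [mul_smul_comm, smul_mul_assoc, smul_sub]
  rw [one_add_neg_sq_pow_eq_sum (R := R), mul_sum, sum_mul, ← sum_sub_distrib, range_eq_Ico,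
    sum_eq_sum_Ico_succ_bot (Nat.succ_pos s), zero_add, Nat.succ_eq_add_one,
    Ico_add_one_right_eq_Icc]
  simp only [commutator_smul, mul_pow_sub_pow_mul_eq_sum, mul_zero, range_zero, sum_empty,
    smul_zero, zero_add]

theorem statement_3_general {V : Type*} [AddCommGroup V] [Module ℝ V]
    (grad D R : Module.End ℝ V)
    (hcomm : D * grad - grad * D = R)
    (s : ℕ) :
    ∀ Y : V,
      (D * (1 + -(grad * grad)) ^ s - (1 + -(grad * grad)) ^ s * D) Y
        = ∑ k ∈ Finset.Icc 1 s,
            ((-1 : ℝ) ^ k * (s.choose k : ℝ)) •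
              ∑ j ∈ Finset.range (2 * k),
                (grad ^ j) (R ((grad ^ (2 * k - 1 - j)) Y)) := by
  intro Y
  simp only [mul_one_add_neg_sq_pow_sub_eq_sum (R := ℝ), hcomm, LinearMap.sum_apply,
    LinearMap.smul_apply, Module.End.mul_apply]

/-- Abstract sections-along-a-loop setting: `grad = ∇_{γ̇}`,
`D = D_X`, `R = R(X,γ̇)·`, `Δ = −grad²`.  Assuming the commutation relation
`[D_X, ∇_{γ̇}] = R(X,γ̇)`, for every positive integer `s`,
`[D_X, (1+Δ)^s]Y = ∑_{k=1}^{s} (−1)^k C(s,k) ∑_{j=0}^{2k−1} ∇_{γ̇}^j ( R(X,γ̇) ∇_{γ̇}^{2k−1−j} Y )`. -/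
theorem statement_3 {V : Type*} [AddCommGroup V] [Module ℝ V]
    (grad D R : Module.End ℝ V)
    (hcomm : D * grad - grad * D = R)
    (s : ℕ) (hs : 0 < s) :
    ∀ Y : V,
      (D * (1 + -(grad * grad)) ^ s - (1 + -(grad * grad)) ^ s * D) Y
        = ∑ k ∈ Finset.Icc 1 s,
            ((-1 : ℝ) ^ k * (s.choose k : ℝ)) •
              ∑ j ∈ Finset.range (2 * k),
                (grad ^ j) (R ((grad ^ (2 * k - 1 - j)) Y)) :=
  statement_3_general grad D R hcomm s
end

section
/- For smooth sections X, Y of γ*TM along a loop γ, the L² pairing −(1/2)⟨[D_Z, 1+Δ]X, Y⟩₀, viewed as a linear functional in Z, is represented in the H¹ inner product by A_X Y = (1/2)(1+Δ)^{−1}( R(X, ∇_{γ̇}Y)γ̇ − R(∇_{γ̇}X, Y)γ̇ ); i.e., −(1/2)⟨[D_Z,1+Δ]X,Y⟩₀ = ⟨A_X Y, Z⟩₁ for all smooth Z. -/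
/-!
Pairing the commutator with `Y`, move `∇_{γ̇}` from `R(Z,γ̇)X` onto `Y` by skew-adjointness,
then use the pair symmetry and skew-symmetry of the curvature to bring `Z` out as the second
argument of both terms; this exhibits the functional as `⟨½ (R(X,∇Y)γ̇ − R(∇X,Y)γ̇), Z⟩₀`,
which is `⟨A_X Y, Z⟩₁` because `(1+Δ)(1+Δ)⁻¹ = 1`.
-/

theorem inner_curvature_eq_neg_inner_curvature {𝕜 V : Type*} [CommRing 𝕜] [AddCommGroup V]
    [Module 𝕜 V] {inner0 : V →ₗ[𝕜] V →ₗ[𝕜] 𝕜} {R : V →ₗ[𝕜] V →ₗ[𝕜] V →ₗ[𝕜] V}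
    (hsym : ∀ a b : V, inner0 a b = inner0 b a)
    (hcurvpair : ∀ a b c d : V, inner0 (R a b c) d = inner0 (R c d a) b)
    (hcurvskew : ∀ a b c d : V, inner0 (R a b c) d = - inner0 c (R a b d))
    (a b c d : V) :
    inner0 (R a b c) d = - inner0 (R c d b) a := by
  rw [hcurvpair, hcurvskew, hsym]

theorem statement_5_general {V : Type*} [AddCommGroup V] [Module ℝ V]
    (inner0 : V →ₗ[ℝ] V →ₗ[ℝ] ℝ)
    (grad Sinv : Module.End ℝ V)
    (R : V →ₗ[ℝ] V →ₗ[ℝ] V →ₗ[ℝ] V)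
    (gdot : V)
    (hsym : ∀ a b : V, inner0 a b = inner0 b a)
    (hskew : ∀ a b : V, inner0 (grad a) b + inner0 a (grad b) = 0)
    (hcurvpair : ∀ a b c d : V, inner0 (R a b c) d = inner0 (R c d a) b)
    (hcurvskew : ∀ a b c d : V, inner0 (R a b c) d = - inner0 c (R a b d))
    (hSinv₁ : (1 - grad * grad) * Sinv = 1)
    (X Y : V) :
    ∀ Z : V,
      -(1 / 2 : ℝ) * inner0 (-(grad (R Z gdot X)) - R Z gdot (grad X)) Y
        = inner0
            ((1 - grad * grad)
              ((1 / 2 : ℝ) • Sinv (R X (grad Y) gdot - R (grad X) Y gdot)))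
            Z := by
  intro Z
  have hinverse : ∀ v : V, (1 - grad * grad) (Sinv v) = v := fun v => by
    rw [← Module.End.mul_apply, hSinv₁, Module.End.one_apply]
  have hparts := hskew (R Z gdot X) Y
  have hfirst := inner_curvature_eq_neg_inner_curvature hsym hcurvpair hcurvskew
    Z gdot X (grad Y)
  have hsecond := inner_curvature_eq_neg_inner_curvature hsym hcurvpair hcurvskew
    Z gdot (grad X) Y
  simp only [map_smul, hinverse, map_sub, map_neg, LinearMap.sub_apply, LinearMap.neg_apply,
    LinearMap.smul_apply, smul_eq_mul]
  linarith

/-- Abstract sections-along-a-loop setting: `inner0` is the L²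
pairing along the loop `γ`, `grad = ∇_{γ̇}` (skew-adjoint), `Δ = −grad²`, so that
`1 + Δ = 1 − grad²` with inverse `Sinv = (1+Δ)^{−1}`; the H¹ pairing is
`⟨A,B⟩₁ = ⟨(1+Δ)A, B⟩₀`; the curvature `R` has its standard symmetries; and
`[D_Z, 1+Δ]X = −∇_{γ̇}(R(Z,γ̇)X) − R(Z,γ̇)(∇_{γ̇}X)`.  Then
`A_X Y := (1/2)(1+Δ)^{−1}( R(X,∇_{γ̇}Y)γ̇ − R(∇_{γ̇}X,Y)γ̇ )` represents the
functional `Z ↦ −(1/2)⟨[D_Z, 1+Δ]X, Y⟩₀` in the H¹ inner product. -/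
theorem statement_5 {V : Type*} [AddCommGroup V] [Module ℝ V]
    (inner0 : V →ₗ[ℝ] V →ₗ[ℝ] ℝ)
    (grad Sinv : Module.End ℝ V)
    (R : V →ₗ[ℝ] V →ₗ[ℝ] V →ₗ[ℝ] V)
    (gdot : V)
    (hsym : ∀ a b : V, inner0 a b = inner0 b a)
    (hskew : ∀ a b : V, inner0 (grad a) b + inner0 a (grad b) = 0)
    (hcurvpair : ∀ a b c d : V, inner0 (R a b c) d = inner0 (R c d a) b)
    (hcurvskew : ∀ a b c d : V, inner0 (R a b c) d = - inner0 c (R a b d))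
    (hSinv₁ : (1 - grad * grad) * Sinv = 1)
    (hSinv₂ : Sinv * (1 - grad * grad) = 1)
    (X Y : V) :
    ∀ Z : V,
      -(1 / 2 : ℝ) * inner0 (-(grad (R Z gdot X)) - R Z gdot (grad X)) Y
        = inner0
            ((1 - grad * grad)
              ((1 / 2 : ℝ) • Sinv (R X (grad Y) gdot - R (grad X) Y gdot)))
            Z :=
  statement_5_general inner0 grad Sinv R gdot hsym hskew hcurvpair hcurvskew hSinv₁ X Y
end
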